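/- For a subset u ⊆ {1,…,d}, the variance of the conditional expectation of f̂ given the coordinates outside u satisfies var(E(f̂ | x_r, r ∉ u)) = Σ_{j=1}^n Σ_{i=1}^n β_j β_i e^{b_j + b_i} ( ∏_{l ∈ u} ε(w_{j,l}) ε(w_{i,l}) ) ( ∏_{r ∉ u} ε(w_{j,r} + w_{i,r}) ) − (E(f̂))². -/

import Mathlib

open MeasureTheory Real

/-- The function ε(t) = (e^t − 1)/t for t ≠ 0, and ε(0) = 1. -/
noncomputable def eps (t : ℝ) : ℝ := if t = 0 then 1 else (Real.exp t - 1) / t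

/-- ELM surrogate with exponential activation:
`f̂(x) = Σ_{j=1}^n β_j exp(w_jᵀ x + b_j)`. -/
noncomputable def elm {d n : ℕ} (β b : Fin n → ℝ) (w : Fin n → Fin d → ℝ)
    (x : Fin d → ℝ) : ℝ :=
  ∑ j, β j * Real.exp ((∑ l, w j l * x l) + b j)


/-- Conditional expectation of `f` given the coordinates in `v`:
the integral of `f` over the coordinates outside `v`, with the coordinates in `v`
fixed to those of `x`. -/
noncomputable def condExp {d : ℕ} (f : (Fin d → ℝ) → ℝ) (v : Finset (Fin d))
    (x : Fin d → ℝ) : ℝ :=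
  ∫ y in Set.Icc (0 : Fin d → ℝ) 1, f (fun l => if l ∈ v then x l else y l)

/-! With `A j = β j e^{b j}`, the surrogate is a linear combination `∑ j, A j e^{c j · x}` of
exponentials of linear forms, and the integral of `e^{c · x}` over the unit cube factors as
`∏ l, ε(c l)` because `∫₀¹ e^{ct} dt = ε(c)`. Integrating out the coordinates in `u` keeps this shape,
with the weights multiplied by `∏_{l ∈ u} ε(c j l)` and the frequencies in `u` set to zero. The square
of such a combination is again one, with frequencies `c j + c i`, and the mean of the conditional
expectation, like that of the surrogate, is `∑ j, A j ∏ l, ε(w j l)`. -/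

theorem setIntegral_Icc_pi_prod {ι 𝕜 : Type*} [Fintype ι] [RCLike 𝕜] (a b : ι → ℝ)
    (f : ι → ℝ → 𝕜) :
    ∫ x in Set.Icc a b, ∏ i, f i (x i) = ∏ i, ∫ t in Set.Icc (a i) (b i), f i t := by
  rw [← Set.pi_univ_Icc, volume_pi, Measure.restrict_pi_pi, integral_fintype_prod_eq_prod]

theorem eps_zero : eps 0 = 1 := if_pos rfl

theorem setIntegral_exp_mul_Icc_zero_one (c : ℝ) :
    ∫ t in Set.Icc (0 : ℝ) 1, exp (c * t) = eps c := by
  rw [integral_Icc_eq_integral_Ioc, ← intervalIntegral.integral_of_le zero_le_one]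
  by_cases hc : c = 0
  · simp [hc, eps]
  · rw [intervalIntegral.integral_comp_mul_left (fun s => exp s) hc]
    simp [integral_exp, eps, hc, div_eq_inv_mul]

theorem setIntegral_exp_dotProduct_unitCube {κ : Type*} [Fintype κ] (c : κ → ℝ) :
    ∫ x in Set.Icc (0 : κ → ℝ) 1, exp (∑ l, c l * x l) = ∏ l, eps (c l) := by
  simp_rw [exp_sum]
  rw [setIntegral_Icc_pi_prod 0 1 fun l t => exp (c l * t)]
  exact Finset.prod_congr rfl fun l _ => setIntegral_exp_mul_Icc_zero_one (c l)

theorem prod_eps_ite_zero {κ : Type*} [Fintype κ] [DecidableEq κ] (s : Finset κ) (c : κ → ℝ) :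
    ∏ l, eps (if l ∈ s then c l else 0) = ∏ l ∈ s, eps (c l) := by
  simp [apply_ite eps, eps_zero, Finset.prod_ite_mem]

noncomputable def expSum {ι κ : Type*} [Fintype ι] [Fintype κ] (A : ι → ℝ) (c : ι → κ → ℝ)
    (x : κ → ℝ) : ℝ :=
  ∑ j, A j * exp (∑ l, c j l * x l)

section expSum

variable {ι κ : Type*} [Fintype ι] [Fintype κ]

theorem setIntegral_expSum_unitCube (A : ι → ℝ) (c : ι → κ → ℝ) :
    ∫ x in Set.Icc (0 : κ → ℝ) 1, expSum A c x = ∑ j, A j * ∏ l, eps (c j l) := by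
  unfold expSum
  rw [integral_finsetSum]
  · simp_rw [integral_const_mul, setIntegral_exp_dotProduct_unitCube]
  · exact fun j _ => (Continuous.continuousOn (by fun_prop)).integrableOn_compact isCompact_Icc

theorem expSum_sq (A : ι → ℝ) (c : ι → κ → ℝ) (x : κ → ℝ) :
    expSum A c x ^ 2 =
      expSum (fun p : ι × ι => A p.1 * A p.2) (fun p l => c p.1 l + c p.2 l) x := by
  simp_rw [expSum, sq, Finset.sum_mul_sum, ← Finset.sum_product', add_mul, Finset.sum_add_distrib,
    exp_add]
  exact Finset.sum_congr rfl fun p _ => by ring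

theorem condExp_expSum {d : ℕ} (A : ι → ℝ) (c : ι → Fin d → ℝ) (v : Finset (Fin d)) :
    condExp (expSum A c) v =
      expSum (fun j => A j * ∏ l ∈ vᶜ, eps (c j l)) (fun j l => if l ∈ v then c j l else 0) := by
  funext x
  have split_coords : ∀ y : Fin d → ℝ, expSum A c (fun l => if l ∈ v then x l else y l) =
      expSum (fun j => A j * exp (∑ l, (if l ∈ v then c j l else 0) * x l))
        (fun j l => if l ∈ vᶜ then c j l else 0) y := by
    intro y
    refine Finset.sum_congr rfl fun j _ => ?_
    rw [mul_assoc, ← exp_add, ← Finset.sum_add_distrib]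
    congr 2
    refine Finset.sum_congr rfl fun l _ => ?_
    by_cases hl : l ∈ v <;> simp [hl]
  simp_rw [_root_.condExp, split_coords, setIntegral_expSum_unitCube, prod_eps_ite_zero, expSum]
  exact Finset.sum_congr rfl fun j _ => by ring

end expSum

theorem elm_eq_expSum {d n : ℕ} (β b : Fin n → ℝ) (w : Fin n → Fin d → ℝ) :
    elm β b w = expSum (fun j => β j * exp (b j)) w := by
  funext x
  exact Finset.sum_congr rfl fun j _ => by rw [exp_add]; ring

theorem elm_var_condExp_complement_general (d n : ℕ)
    (β b : Fin n → ℝ) (w : Fin n → Fin d → ℝ) (u : Finset (Fin d)) :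
    (∫ x in Set.Icc (0 : Fin d → ℝ) 1, (condExp (elm β b w) uᶜ x) ^ 2) -
        (∫ x in Set.Icc (0 : Fin d → ℝ) 1, condExp (elm β b w) uᶜ x) ^ 2 =
      (∑ j, ∑ i, β j * β i * Real.exp (b j + b i) *
          (∏ l ∈ u, eps (w j l) * eps (w i l)) *
          ∏ r ∈ uᶜ, eps (w j r + w i r)) -
        (∫ x in Set.Icc (0 : Fin d → ℝ) 1, elm β b w x) ^ 2 := by
  simp_rw [elm_eq_expSum, condExp_expSum, expSum_sq, setIntegral_expSum_unitCube, ite_add_ite,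
    add_zero, prod_eps_ite_zero, compl_compl]
  rw [Fintype.sum_prod_type]
  congr 1
  · refine Finset.sum_congr rfl fun j _ => Finset.sum_congr rfl fun i _ => ?_
    rw [exp_add, Finset.prod_mul_distrib]
    ring
  · simp_rw [mul_assoc, Finset.prod_mul_prod_compl]

/-- For a subset `u ⊆ {1,…,d}`, the variance of the conditional expectation of the
ELM surrogate given the coordinates outside `u` satisfies
`var(E(f̂ | x_r, r ∉ u)) = Σ_j Σ_i β_j β_i e^{b_j+b_i}
  (∏_{l∈u} ε(w_{j,l}) ε(w_{i,l})) (∏_{r∉u} ε(w_{j,r}+w_{i,r})) − (E(f̂))²`. -/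
theorem elm_var_condExp_complement (d n : ℕ) (hd : 0 < d) (hn : 0 < n)
    (β b : Fin n → ℝ) (w : Fin n → Fin d → ℝ) (u : Finset (Fin d)) :
    (∫ x in Set.Icc (0 : Fin d → ℝ) 1, (condExp (elm β b w) uᶜ x) ^ 2) -
        (∫ x in Set.Icc (0 : Fin d → ℝ) 1, condExp (elm β b w) uᶜ x) ^ 2 =
      (∑ j, ∑ i, β j * β i * Real.exp (b j + b i) *
          (∏ l ∈ u, eps (w j l) * eps (w i l)) *
          ∏ r ∈ uᶜ, eps (w j r + w i r)) -
        (∫ x in Set.Icc (0 : Fin d → ℝ) 1, elm β b w x) ^ 2 :=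
  elm_var_condExp_complement_general d n β b w u
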